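/- Evenness (parity) preservation by the self-consistent flow: let P := (1 − 2n↑)·(1 − 2n↓) ∈ M₄(ℂ) be the parity operator, and let d : ℝ → M₄(ℂ) be a self-consistent trajectory such that P·d(0)·P = d(0). Then P·d(t)·P = d(t) for every t ∈ ℝ. -/

import Mathlib

open Matrix
open scoped ComplexOrder

noncomputable section

/-- `M₄(ℂ)`, the algebra of 4×4 complex matrices, identified with the linear
operators on the one-site fermionic Fock space `ℂ⁴`. -/
abbrev M4 : Type := Matrix (Fin 4) (Fin 4) ℂ

noncomputable instance : NormedAddCommGroup M4 := Matrix.normedAddCommGroup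
noncomputable instance : NormedSpace ℝ M4 := Matrix.normedSpace

/-- The canonical anticommutation relations for the two matrices `A↑ = Aup`,
`A↓ = Adn`: `Aₛ·Aₜ + Aₜ·Aₛ = 0` and `Aₛ·Aₜ* + Aₜ*·Aₛ = δ_{s,t}·1` for
`s, t ∈ {↑,↓}`. -/
def CAR (Aup Adn : M4) : Prop :=
  Aup * Aup + Aup * Aup = 0 ∧
  Aup * Adn + Adn * Aup = 0 ∧
  Adn * Adn + Adn * Adn = 0 ∧
  Aup * Aupᴴ + Aupᴴ * Aup = 1 ∧
  Aup * Adnᴴ + Adnᴴ * Aup = 0 ∧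
  Adn * Aupᴴ + Aupᴴ * Adn = 0 ∧
  Adn * Adnᴴ + Adnᴴ * Adn = 1

/-- `dh(c) := 2λ n↑n↓ − μ(n↑+n↓) − h(n↑−n↓) − γ(c·A↑*A↓* + c̄·A↓A↑)`,
where `nₛ := Aₛ*·Aₛ`. -/
def dh (Aup Adn : M4) (mu h lam gam : ℝ) (c : ℂ) : M4 :=
  (2 * lam : ℂ) • (Aupᴴ * Aup * (Adnᴴ * Adn))
    - (mu : ℂ) • (Aupᴴ * Aup + Adnᴴ * Adn)
    - (h : ℂ) • (Aupᴴ * Aup - Adnᴴ * Adn)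
    - (gam : ℂ) • (c • (Aupᴴ * Adnᴴ) + (starRingEnd ℂ c) • (Adn * Aup))

/-- A density matrix: Hermitian, positive semidefinite, of trace 1. -/
def IsDensityMatrix (d : M4) : Prop :=
  d.IsHermitian ∧ d.PosSemidef ∧ d.trace = 1

/-- A self-consistent trajectory: a differentiable map `d : ℝ → M₄(ℂ)` such that
`d t` is a density matrix for all `t` and
`d′(t) = −i·[dh(Tr(d(t)·A↓A↑)), d(t)]` for all `t ∈ ℝ`. -/
def SelfConsistent (Aup Adn : M4) (mu h lam gam : ℝ) (d : ℝ → M4) : Prop :=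
  (∀ t : ℝ, IsDensityMatrix (d t)) ∧
  ∀ t : ℝ, HasDerivAt d
      ((-Complex.I) •
        (dh Aup Adn mu h lam gam ((d t * (Adn * Aup)).trace) * d t
          - d t * dh Aup Adn mu h lam gam ((d t * (Adn * Aup)).trace))) t

/-- The parity operator `P := (1 − 2n↑)·(1 − 2n↓)`. -/
def parity (Aup Adn : M4) : M4 :=
  ((1 : M4) - (2 : ℂ) • (Aupᴴ * Aup)) * ((1 : M4) - (2 : ℂ) • (Adnᴴ * Adn))

/-!
Each factor `1 - 2nₛ` of `P` anticommutes with its own mode `Aₛ, Aₛ*` and commutes with the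
other one, so `P` anticommutes with all four generators and hence commutes with every
`dh(c)`, a combination of products of two generators. Once the trajectory `d` is fixed,
`H(t) := dh(Tr(d(t)·A↓A↑))` is continuous and both `d(t)` and `P·d(t)·P` solve the linear
equation `x′ = −i[H(t), x]` with the same initial value, so they coincide by uniqueness for
linear ODEs with continuous coefficients.
-/

instance Matrix.instIsAddTorsionFree {m n α : Type*} [AddMonoid α] [IsAddTorsionFree α] :
    IsAddTorsionFree (Matrix m n α) :=
  inferInstanceAs (IsAddTorsionFree (m → n → α))

def AntiCommute {R : Type*} [NonUnitalNonAssocSemiring R] (a b : R) : Prop :=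
  a * b + b * a = 0

namespace AntiCommute

variable {R : Type*}

theorem symm [NonUnitalNonAssocSemiring R] {a b : R} (h : AntiCommute a b) :
    AntiCommute b a := by
  rwa [AntiCommute, add_comm]

theorem mul_self_eq_zero [NonUnitalNonAssocSemiring R] [IsAddTorsionFree R] {a : R}
    (h : AntiCommute a a) : a * a = 0 := by
  rwa [AntiCommute, ← two_nsmul, smul_eq_zero, or_iff_right two_ne_zero] at h

theorem conjTranspose {n α : Type*} [Fintype n] [NonUnitalNonAssocSemiring α] [StarRing α]
    {a b : Matrix n n α} (h : AntiCommute a b) : AntiCommute aᴴ bᴴ := by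
  simpa [AntiCommute, add_comm] using congrArg Matrix.conjTranspose h

variable [Ring R] {p q x y : R}

theorem iff_semiconjBy : AntiCommute p x ↔ SemiconjBy p x (-x) := by
  rw [AntiCommute, SemiconjBy, neg_mul, eq_neg_iff_add_eq_zero]

theorem commute_mul_right (hx : AntiCommute p x) (hy : AntiCommute p y) :
    Commute p (x * y) := by
  simpa [Commute] using (iff_semiconjBy.1 hx).mul_right (iff_semiconjBy.1 hy)

theorem mul_left_of_commute (hp : AntiCommute p x) (hq : Commute q x) :
    AntiCommute (p * q) x :=
  iff_semiconjBy.2 ((iff_semiconjBy.1 hp).mul_left hq)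

end AntiCommute

theorem Commute.antiCommute_mul_left {R : Type*} [Ring R] {p q x : R} (hp : Commute p x)
    (hq : AntiCommute q x) : AntiCommute (p * q) x :=
  AntiCommute.iff_semiconjBy.2 <|
    SemiconjBy.mul_left hp.neg_right (AntiCommute.iff_semiconjBy.1 hq)

section ModeParity

variable {R : Type*} [Ring R] {a b c : R}

def modeParity (a b : R) : R := 1 - 2 * (b * a)

theorem antiCommute_modeParity_left (ha : a * a = 0) (hab : a * b + b * a = 1) :
    AntiCommute (modeParity a b) a := by
  have e : a * b = 1 - b * a := eq_sub_of_add_eq hab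
  calc (1 - 2 * (b * a)) * a + a * (1 - 2 * (b * a))
      = 2 * a - 2 * (b * (a * a)) - 2 * (a * b * a) := by noncomm_ring
    _ = 0 := by rw [e, sub_mul, one_mul, mul_assoc b a a, ha]; noncomm_ring

theorem antiCommute_modeParity_right (hb : b * b = 0) (hab : a * b + b * a = 1) :
    AntiCommute (modeParity a b) b := by
  have e : a * b = 1 - b * a := eq_sub_of_add_eq hab
  calc (1 - 2 * (b * a)) * b + b * (1 - 2 * (b * a))
      = 2 * b - 2 * (b * (a * b)) - 2 * (b * b * a) := by noncomm_ring
    _ = 0 := by rw [e, mul_sub, mul_one, ← mul_assoc b b a, hb]; noncomm_ring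

theorem commute_modeParity (hac : AntiCommute a c) (hbc : AntiCommute b c) :
    Commute (modeParity a b) c :=
  (Commute.one_left c).sub_left
    ((Commute.ofNat_left 2 c).mul_left (hbc.symm.commute_mul_right hac.symm).symm)

end ModeParity

theorem parity_eq_modeParity_mul (Aup Adn : M4) :
    parity Aup Adn = modeParity Aup Aupᴴ * modeParity Adn Adnᴴ := by
  simp only [parity, modeParity, two_smul, two_mul]

namespace CAR

variable {Aup Adn : M4}

theorem antiCommute_parity (hCAR : CAR Aup Adn) :
    AntiCommute (parity Aup Adn) Aup ∧ AntiCommute (parity Aup Adn) Aupᴴ ∧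
      AntiCommute (parity Aup Adn) Adn ∧ AntiCommute (parity Aup Adn) Adnᴴ := by
  obtain ⟨hup, hup_dn, hdn, hup_one, hup_dn', hdn_up', hdn_one⟩ : AntiCommute Aup Aup ∧
      AntiCommute Aup Adn ∧ AntiCommute Adn Adn ∧ _ ∧ AntiCommute Aup Adnᴴ ∧
      AntiCommute Adn Aupᴴ ∧ _ := hCAR
  have hup'_dn' : AntiCommute Aupᴴ Adnᴴ := AntiCommute.conjTranspose hup_dn
  have hup0 : Aup * Aup = 0 := AntiCommute.mul_self_eq_zero hup
  have hdn0 : Adn * Adn = 0 := AntiCommute.mul_self_eq_zero hdn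
  have hup0' : Aupᴴ * Aupᴴ = 0 := (AntiCommute.conjTranspose hup).mul_self_eq_zero
  have hdn0' : Adnᴴ * Adnᴴ = 0 := (AntiCommute.conjTranspose hdn).mul_self_eq_zero
  rw [parity_eq_modeParity_mul]
  refine ⟨?_, ?_, ?_, ?_⟩
  · exact (antiCommute_modeParity_left hup0 hup_one).mul_left_of_commute
      (commute_modeParity hup_dn.symm hup_dn'.symm)
  · exact (antiCommute_modeParity_right hup0' hup_one).mul_left_of_commute
      (commute_modeParity hdn_up' hup'_dn'.symm)
  · exact (commute_modeParity hup_dn hdn_up'.symm).antiCommute_mul_left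
      (antiCommute_modeParity_left hdn0 hdn_one)
  · exact (commute_modeParity hup_dn' hup'_dn').antiCommute_mul_left
      (antiCommute_modeParity_right hdn0' hdn_one)

theorem commute_parity_dh (hCAR : CAR Aup Adn) (mu h lam gam : ℝ) (c : ℂ) :
    Commute (parity Aup Adn) (dh Aup Adn mu h lam gam c) := by
  obtain ⟨hup, hup', hdn, hdn'⟩ := hCAR.antiCommute_parity
  have hnup : Commute (parity Aup Adn) (Aupᴴ * Aup) := hup'.commute_mul_right hup
  have hndn : Commute (parity Aup Adn) (Adnᴴ * Adn) := hdn'.commute_mul_right hdn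
  have hupdn : Commute (parity Aup Adn) (Aupᴴ * Adnᴴ) := hup'.commute_mul_right hdn'
  have hdnup : Commute (parity Aup Adn) (Adn * Aup) := hdn.commute_mul_right hup
  -- every term of `dh c` is a multiple of a product of the even elements above
  exact ((((hnup.mul_right hndn).smul_right _).sub_right
      ((hnup.add_right hndn).smul_right _)).sub_right
      ((hnup.sub_right hndn).smul_right _)).sub_right
    (((hupdn.smul_right _).add_right (hdnup.smul_right _)).smul_right _)

end CAR

section LinearODE

open Filter Topology

variable {E : Type*} [NormedAddCommGroup E] [NormedSpace ℝ E]

theorem ODE_solution_unique_of_continuous_clm {L : ℝ → E →L[ℝ] E} (hL : Continuous L)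
    {f g : ℝ → E} {t₀ : ℝ} (hf : ∀ t, HasDerivAt f (L t (f t)) t)
    (hg : ∀ t, HasDerivAt g (L t (g t)) t) (heq : f t₀ = g t₀) : f = g := by
  have hfc : Continuous f := continuous_iff_continuousAt.2 fun t => (hf t).continuousAt
  have hgc : Continuous g := continuous_iff_continuousAt.2 fun t => (hg t).continuousAt
  suffices {t | f t = g t} = Set.univ from funext (Set.eq_univ_iff_forall.1 this)
  refine IsClopen.eq_univ ⟨isClosed_eq hfc hgc, isOpen_iff_mem_nhds.2 fun s hs => ?_⟩ ⟨t₀, heq⟩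
  -- near `s` the operator norm of `L` stays below `‖L s‖ + 1`, a uniform Lipschitz constant
  have hK : ∀ᶠ t in 𝓝 s, ‖L t‖₊ < ‖L s‖₊ + 1 :=
    (hL.nnnorm.tendsto s).eventually (gt_mem_nhds (lt_add_one _))
  exact ODE_solution_unique_of_eventually (s := fun _ => Set.univ)
    (hK.mono fun t ht => ((L t).lipschitz.weaken ht.le).lipschitzOnWith)
    (Eventually.of_forall fun t => ⟨hf t, trivial⟩)
    (Eventually.of_forall fun t => ⟨hg t, trivial⟩) hs

variable [FiniteDimensional ℝ E] {F : Type*} [NormedAddCommGroup F] [NormedSpace ℝ F]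
  [FiniteDimensional ℝ F] (B : F →ₗ[ℝ] E →ₗ[ℝ] E) {H : ℝ → F}

theorem ODE_solution_unique_of_bilinear (hH : Continuous H) {f g : ℝ → E} {t₀ : ℝ}
    (hf : ∀ t, HasDerivAt f (B (H t) (f t)) t) (hg : ∀ t, HasDerivAt g (B (H t) (g t)) t)
    (heq : f t₀ = g t₀) : f = g :=
  ODE_solution_unique_of_continuous_clm
    (L := fun t => LinearMap.toContinuousLinearMap (B (H t)))
    ((LinearMap.toContinuousLinearMap.toLinearMap ∘ₗ B).continuous_of_finiteDimensional.comp hH)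
    hf hg heq

theorem ODE_solution_map_eq_of_commute (hH : Continuous H) (T : E →ₗ[ℝ] E)
    (hT : ∀ t x, T (B (H t) x) = B (H t) (T x)) {f : ℝ → E} {t₀ : ℝ}
    (hf : ∀ t, HasDerivAt f (B (H t) (f t)) t) (h₀ : T (f t₀) = f t₀) (t : ℝ) :
    T (f t) = f t := by
  have hTf : ∀ t, HasDerivAt (fun s => T (f s)) (B (H t) (T (f t))) t := fun t => by
    rw [← hT]
    exact (LinearMap.toContinuousLinearMap T).hasFDerivAt.comp_hasDerivAt t (hf t)
  exact congrFun (ODE_solution_unique_of_bilinear B hH hTf hf h₀) t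

end LinearODE

def vonNeumannGenerator : M4 →ₗ[ℝ] M4 →ₗ[ℝ] M4 :=
  LinearMap.mk₂ ℝ (fun H x => (-Complex.I) • (H * x - x * H))
    (fun _ _ _ => by simp only [add_mul, mul_add, smul_sub, smul_add]; abel)
    (fun _ _ _ => by simp only [smul_mul_assoc, mul_smul_comm, ← smul_sub]; rw [smul_comm])
    (fun _ _ _ => by simp only [add_mul, mul_add, smul_sub, smul_add]; abel)
    (fun _ _ _ => by simp only [smul_mul_assoc, mul_smul_comm, ← smul_sub]; rw [smul_comm])

theorem Commute.conj_vonNeumannGenerator {P H : M4} (hPH : Commute P H) (x : M4) :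
    P * vonNeumannGenerator H x * P = vonNeumannGenerator H (P * x * P) := by
  simp only [vonNeumannGenerator, LinearMap.mk₂_apply, mul_smul_comm, smul_mul_assoc]
  congr 1
  calc P * (H * x - x * H) * P = (P * H) * x * P - P * x * (H * P) := by noncomm_ring
    _ = (H * P) * x * P - P * x * (P * H) := by rw [hPH.eq]
    _ = H * (P * x * P) - (P * x * P) * H := by noncomm_ring

theorem continuous_dh (Aup Adn : M4) (mu h lam gam : ℝ) :
    Continuous (dh Aup Adn mu h lam gam) := by
  unfold dh
  fun_prop

theorem parity_preserved (Aup Adn : M4) (hCAR : CAR Aup Adn)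
    (mu h lam gam : ℝ)
    (d : ℝ → M4) (hd : SelfConsistent Aup Adn mu h lam gam d)
    (h0 : parity Aup Adn * d 0 * parity Aup Adn = d 0) :
    ∀ t : ℝ, parity Aup Adn * d t * parity Aup Adn = d t := by
  obtain ⟨-, hflow⟩ := hd
  have hd_cont : Continuous d := continuous_iff_continuousAt.2 fun t => (hflow t).continuousAt
  exact ODE_solution_map_eq_of_commute vonNeumannGenerator
    ((continuous_dh Aup Adn mu h lam gam).comp
      (hd_cont.matrix_mul continuous_const).matrix_trace)
    (LinearMap.mulRight ℝ (parity Aup Adn) ∘ₗ LinearMap.mulLeft ℝ (parity Aup Adn))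
    (fun _ x => (hCAR.commute_parity_dh mu h lam gam _).conj_vonNeumannGenerator x) hflow h0
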